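/- arXiv:1509.01900 — 4 statements merged into one kernel-verified Lean document; each statement's English description precedes it below -/
import Mathlib

section
/- If κ_i = 1 for all i and α > 0, then there exist constants c, C > 0 such that for all n ≥ 1, c · n^{-2α/(1+2α)} ≤ ∑_{i≥1} 1/(i^{1+2α} + n) ≤ C · n^{-2α/(1+2α)}. -/
/-!
Put `x = n ^ (1 / β)`, so that `i ^ β ≤ n` exactly when `i ≤ x`. The roughly `x` terms with
`i ≤ x` are each between `1 / (2 n)` and `1 / n`, contributing order `x / n`; the remaining terms
are at most `i ^ (-β)`, and comparing their sum with `∫_x^∞ t ^ (-β) dt` bounds it by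
`x ^ (1 - β) / (β - 1)`. Both quantities equal `n ^ (1 / β - 1)` up to constants.
-/

open Finset Real

noncomputable def posteriorVariance (β n : ℝ) : ℝ :=
  ∑' i : ℕ, 1 / (((i : ℝ) + 1) ^ β + n)

lemma summable_posteriorVariance {β n : ℝ} (hβ : 1 < β) (hn : 0 ≤ n) :
    Summable fun i : ℕ => 1 / (((i : ℝ) + 1) ^ β + n) := by
  refine .of_nonneg_of_le (fun i => by positivity) (fun i => ?_)
    ((Real.summable_one_div_nat_add_rpow 1 β).2 hβ)
  rw [abs_of_pos (by positivity)]
  gcongr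
  exact le_add_of_nonneg_right hn

lemma sum_range_rpow_neg_le {β K : ℝ} (hβ : 1 < β) (hK : 0 < K) (M : ℕ) :
    ∑ i ∈ range M, (K + ↑(i + 1)) ^ (-β) ≤ K ^ (1 - β) / (β - 1) := by
  have hanti : AntitoneOn (fun x : ℝ => x ^ (-β)) (Set.Icc K (K + M)) := fun x hx y _ hxy =>
    rpow_le_rpow_of_nonpos (hK.trans_le hx.1) hxy (by linarith)
  have hint : ∫ x in K..K + M, x ^ (-β) = (K ^ (1 - β) - (K + M) ^ (1 - β)) / (β - 1) := by
    rw [integral_rpow (.inr ⟨by linarith, fun h => ?_⟩)]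
    · rw [show -β + 1 = 1 - β by ring, ← neg_div_neg_eq]
      ring_nf
    · rw [Set.uIcc_of_le (by simp)] at h
      exact hK.not_ge h.1
  calc ∑ i ∈ range M, (K + ↑(i + 1)) ^ (-β)
        ≤ ∫ x in K..K + M, x ^ (-β) := hanti.sum_le_integral
    _ ≤ K ^ (1 - β) / (β - 1) := by
      rw [hint]
      gcongr
      exact sub_le_self _ (by positivity)

lemma le_posteriorVariance {β n : ℝ} (hβ : 1 < β) (hn : 0 < n) {K : ℕ}
    (hK : (K : ℝ) ^ β ≤ n) :
    K / (2 * n) ≤ posteriorVariance β n := by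
  have hterm : ∀ i ∈ range K, 1 / (2 * n) ≤ 1 / (((i : ℝ) + 1) ^ β + n) := fun i hi => by
    have hiK : (i : ℝ) + 1 ≤ K := by exact_mod_cast mem_range.1 hi
    gcongr
    linarith [rpow_le_rpow (by positivity) hiK (by linarith : 0 ≤ β)]
  calc (K : ℝ) / (2 * n) = ∑ i ∈ range K, 1 / (2 * n) := by
        rw [sum_const, card_range, nsmul_eq_mul, mul_one_div]
    _ ≤ ∑ i ∈ range K, 1 / (((i : ℝ) + 1) ^ β + n) := sum_le_sum hterm
    _ ≤ posteriorVariance β n :=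
      (summable_posteriorVariance hβ hn.le).sum_le_tsum _ fun i _ => by positivity

lemma posteriorVariance_le {β n : ℝ} (hβ : 1 < β) (hn : 0 < n) {K : ℕ} (hK : 0 < K) :
    posteriorVariance β n ≤ K / n + (K : ℝ) ^ (1 - β) / (β - 1) := by
  have hhead : ∑ i ∈ range K, 1 / (((i : ℝ) + 1) ^ β + n) ≤ K / n := by
    calc ∑ i ∈ range K, 1 / (((i : ℝ) + 1) ^ β + n) ≤ ∑ i ∈ range K, 1 / n :=
          sum_le_sum fun i _ => by gcongr; exact le_add_of_nonneg_left (by positivity)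
      _ = K / n := by
        rw [sum_const, card_range, nsmul_eq_mul, mul_one_div]
  have htail : ∑' i : ℕ, 1 / ((((i + K : ℕ) : ℝ) + 1) ^ β + n)
      ≤ (K : ℝ) ^ (1 - β) / (β - 1) := by
    refine Real.tsum_le_of_sum_range_le (fun i => by positivity) fun M => ?_
    refine le_trans (sum_le_sum fun i _ => ?_) (sum_range_rpow_neg_le hβ (by positivity) M)
    rw [rpow_neg (by positivity), ← one_div,
      show (K : ℝ) + ↑(i + 1) = ((i + K : ℕ) : ℝ) + 1 by push_cast; ring]
    gcongr
    exact le_add_of_nonneg_right hn.le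
  rw [posteriorVariance, ← (summable_posteriorVariance hβ hn.le).sum_add_tsum_nat_add K]
  exact add_le_add hhead htail

lemma posteriorVariance_order {β n : ℝ} (hβ : 1 < β) (hn : 1 ≤ n) :
    n ^ (β⁻¹ - 1) / 4 ≤ posteriorVariance β n ∧
      posteriorVariance β n ≤ (2 + (β - 1)⁻¹) * n ^ (β⁻¹ - 1) := by
  have hn0 : 0 < n := by linarith
  set x := n ^ β⁻¹ with hx
  have hx1 : 1 ≤ x := one_le_rpow hn (by positivity)
  have hxβ : x ^ β = n := rpow_inv_rpow hn0.le (by positivity)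
  have hxn : x / n = n ^ (β⁻¹ - 1) := (rpow_sub_one hn0.ne' _).symm
  have hx1β : x ^ (1 - β) = n ^ (β⁻¹ - 1) := by
    rw [hx, ← rpow_mul hn0.le]
    congr 1
    field_simp
  constructor
  · have hK : (⌊x⌋₊ : ℝ) ^ β ≤ n :=
      hxβ ▸ rpow_le_rpow (by positivity) (Nat.floor_le (by linarith)) (by linarith)
    calc n ^ (β⁻¹ - 1) / 4 = x / 2 / (2 * n) := by rw [← hxn]; ring
      _ ≤ ⌊x⌋₊ / (2 * n) := by gcongr; exact (Nat.div_two_lt_floor hx1).le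
      _ ≤ posteriorVariance β n := le_posteriorVariance hβ hn0 hK
  · have hxK : x ≤ ⌈x⌉₊ := Nat.le_ceil x
    calc posteriorVariance β n ≤ ⌈x⌉₊ / n + (⌈x⌉₊ : ℝ) ^ (1 - β) / (β - 1) :=
          posteriorVariance_le hβ hn0 (Nat.ceil_pos.2 (by linarith))
      _ ≤ 2 * x / n + x ^ (1 - β) / (β - 1) := by
          gcongr ?_ / n + ?_
          · exact Nat.ceil_le_two_mul (by linarith)
          · exact div_le_div_of_nonneg_right
              (rpow_le_rpow_of_nonpos (by linarith) hxK (by linarith)) (by linarith)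
      _ = (2 + (β - 1)⁻¹) * n ^ (β⁻¹ - 1) := by rw [mul_div_assoc, hxn, hx1β]; ring

/-- For κ_i = 1 and α > 0, the total posterior variance ∑_{i≥1} 1/(i^{1+2α}+n) is of exact
order n^{-2α/(1+2α)}. -/
theorem posterior_variance_order (α : ℝ) (hα : 0 < α) :
    ∃ c C : ℝ, 0 < c ∧ 0 < C ∧ ∀ n : ℕ, 1 ≤ n →
      c * (n : ℝ) ^ (-(2 * α) / (1 + 2 * α)) ≤
          (∑' i : ℕ, 1 / (((i : ℝ) + 1) ^ (1 + 2 * α) + n)) ∧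
        (∑' i : ℕ, 1 / (((i : ℝ) + 1) ^ (1 + 2 * α) + n)) ≤
          C * (n : ℝ) ^ (-(2 * α) / (1 + 2 * α)) := by
  refine ⟨4⁻¹, 2 + (2 * α)⁻¹, by norm_num, by positivity, fun n hn => ?_⟩
  have hexp : -(2 * α) / (1 + 2 * α) = (1 + 2 * α)⁻¹ - 1 := by field_simp; ring
  obtain ⟨hlower, hupper⟩ := posteriorVariance_order (by linarith : 1 < 1 + 2 * α)
    (by exact_mod_cast hn : (1 : ℝ) ≤ n)
  rw [add_sub_cancel_left] at hupper
  rw [hexp, inv_mul_eq_div]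
  exact ⟨hlower, hupper⟩
end

section
/- If θ₀ is a self-similar sequence satisfying c₁ N^{-2β} ≤ ∑_{i=N}^{2N} θ_{0,i}² ≤ c₂ N^{-2β} for all N ≥ N₀ (with 0 < c₁ ≤ c₂, β > 0), then θ₀ satisfies the polished tail condition with ρ = 2 and some constant c > 0 depending only on c₁, c₂, β. -/
/-!
Split `[N, ∞)` into the dyadic blocks `[2ᵏN, 2ᵏ⁺¹N)`. The upper self-similarity bound makes the
`k`-th block at most `c₂ N^{-2β} rᵏ` with `r = 2^{-2β} < 1`, so the tail is at most
`c₂ N^{-2β} / (1 - r)`, while the lower bound makes the first block at least `c₁ N^{-2β}`.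
Hence `c = c₁ (1 - r) / c₂` works.
-/

open Finset

theorem Finset.sum_Ico_eq_sum_range_sum_Ico {M : Type*} [AddCommMonoid M] (f : ℕ → M)
    {u : ℕ → ℕ} (hu : Monotone u) (m : ℕ) :
    ∑ i ∈ Ico (u 0) (u m), f i = ∑ k ∈ range m, ∑ i ∈ Ico (u k) (u (k + 1)), f i := by
  induction m with
  | zero => simp
  | succ m ih =>
    rw [← sum_Ico_consecutive f (hu m.zero_le) (hu m.le_succ), ih, sum_range_succ]

theorem Real.two_pow_mul_rpow {x : ℝ} (hx : 0 ≤ x) (p : ℝ) (k : ℕ) :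
    ((2 : ℝ) ^ k * x) ^ p = ((2 : ℝ) ^ p) ^ k * x ^ p := by
  rw [Real.mul_rpow (by positivity) hx, ← Real.rpow_natCast, ← Real.rpow_natCast,
    ← Real.rpow_mul zero_le_two, ← Real.rpow_mul zero_le_two, mul_comm (k : ℝ) p]

section DyadicBlocks

variable {f : ℕ → ℝ} {C p : ℝ} {N₀ N : ℕ}

theorem sum_Ico_two_pow_mul_le
    (hblock : ∀ n, N₀ ≤ n → ∑ i ∈ Ico n (2 * n), f i ≤ C * (n : ℝ) ^ p) (hN : N₀ ≤ N)
    (m : ℕ) :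
    ∑ i ∈ Ico N (2 ^ m * N), f i ≤ C * (N : ℝ) ^ p * ∑ k ∈ range m, ((2 : ℝ) ^ p) ^ k := by
  have hu : Monotone fun k => 2 ^ k * N := fun a b hab =>
    Nat.mul_le_mul_right N (Nat.pow_le_pow_right two_pos hab)
  have hsplit := sum_Ico_eq_sum_range_sum_Ico f hu m
  simp only [pow_zero, one_mul] at hsplit
  rw [hsplit, mul_sum]
  refine sum_le_sum fun k _ => ?_
  have hk : N₀ ≤ 2 ^ k * N := hN.trans (Nat.le_mul_of_pos_left N (by positivity))
  calc ∑ i ∈ Ico (2 ^ k * N) (2 ^ (k + 1) * N), f i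
      = ∑ i ∈ Ico (2 ^ k * N) (2 * (2 ^ k * N)), f i := by rw [pow_succ', mul_assoc]
    _ ≤ C * ((2 ^ k * N : ℕ) : ℝ) ^ p := hblock _ hk
    _ = C * (N : ℝ) ^ p * ((2 : ℝ) ^ p) ^ k := by
      push_cast
      rw [Real.two_pow_mul_rpow N.cast_nonneg]
      ring

theorem tsum_le_of_block_sum_le (hf : ∀ i, 0 ≤ f i) (hp : p < 0) (hN₀ : 1 ≤ N₀)
    (hblock : ∀ n, N₀ ≤ n → ∑ i ∈ Ico n (2 * n), f i ≤ C * (n : ℝ) ^ p) (hN : N₀ ≤ N) :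
    ∑' i, f (N + i) ≤ C * (N : ℝ) ^ p / (1 - (2 : ℝ) ^ p) := by
  have hr₀ : 0 ≤ (2 : ℝ) ^ p := by positivity
  have hr₁ : (2 : ℝ) ^ p < 1 := Real.rpow_lt_one_of_one_lt_of_neg one_lt_two hp
  have hCN : 0 ≤ C * (N : ℝ) ^ p :=
    (sum_nonneg fun i _ => hf i).trans (hblock N hN)
  refine Real.tsum_le_of_sum_range_le (fun i => hf _) fun m => ?_
  have hsub : Ico N (N + m) ⊆ Ico N (2 ^ m * N) :=
    Ico_subset_Ico_right (by nlinarith [m.lt_two_pow_self, hN₀.trans hN])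
  calc ∑ i ∈ range m, f (N + i)
      = ∑ i ∈ Ico N (N + m), f i := by rw [sum_Ico_eq_sum_range, Nat.add_sub_cancel_left]
    _ ≤ ∑ i ∈ Ico N (2 ^ m * N), f i := sum_le_sum_of_subset_of_nonneg hsub fun i _ _ => hf i
    _ ≤ C * (N : ℝ) ^ p * ∑ k ∈ range m, ((2 : ℝ) ^ p) ^ k := sum_Ico_two_pow_mul_le hblock hN m
    _ ≤ C * (N : ℝ) ^ p * (1 / (1 - (2 : ℝ) ^ p)) := by
      gcongr
      simpa using geom_sum_Ico_le_of_lt_one (m := 0) (n := m) hr₀ hr₁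
    _ = C * (N : ℝ) ^ p / (1 - (2 : ℝ) ^ p) := mul_one_div _ _

end DyadicBlocks

/-- A self-similar sequence (block sums of order N^{-2β}) satisfies the polished tail condition
with ρ = 2: there is c > 0, depending only on c₁, c₂, β, such that for all N ≥ N₀ the block sum
∑_{N ≤ i < 2N} θ_i² is at least c times the tail sum ∑_{i ≥ N} θ_i². -/
theorem self_similar_polished_tail
    (θ : ℕ → ℝ) (β c₁ c₂ : ℝ) (hβ : 0 < β) (hc₁ : 0 < c₁) (hc₁₂ : c₁ ≤ c₂)
    (N₀ : ℕ) (hN₀ : 1 ≤ N₀)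
    (hss : ∀ N, N₀ ≤ N →
      c₁ * (N : ℝ) ^ (-(2 * β)) ≤ (∑ i ∈ Finset.Ico N (2 * N), θ i ^ 2) ∧
        (∑ i ∈ Finset.Ico N (2 * N), θ i ^ 2) ≤ c₂ * (N : ℝ) ^ (-(2 * β))) :
    ∃ c : ℝ, 0 < c ∧ ∀ N, N₀ ≤ N →
      c * (∑' i : ℕ, θ (N + i) ^ 2) ≤ ∑ i ∈ Finset.Ico N (2 * N), θ i ^ 2 := by
  set r : ℝ := (2 : ℝ) ^ (-(2 * β))
  have hp : -(2 * β) < 0 := by linarith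
  have hr : 0 < 1 - r := sub_pos.2 (Real.rpow_lt_one_of_one_lt_of_neg one_lt_two hp)
  have hc₂ : 0 < c₂ := hc₁.trans_le hc₁₂
  refine ⟨c₁ * (1 - r) / c₂, by positivity, fun N hN => ?_⟩
  have htail := tsum_le_of_block_sum_le (fun i => sq_nonneg (θ i)) hp hN₀
    (fun n hn => (hss n hn).2) hN
  calc c₁ * (1 - r) / c₂ * ∑' i, θ (N + i) ^ 2
      ≤ c₁ * (1 - r) / c₂ * (c₂ * (N : ℝ) ^ (-(2 * β)) / (1 - r)) :=
        mul_le_mul_of_nonneg_left htail (by positivity)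
    _ = c₁ * (N : ℝ) ^ (-(2 * β)) := by field_simp
    _ ≤ ∑ i ∈ Ico N (2 * N), θ i ^ 2 := (hss N hN).1
end

section
/- The squared bias of the posterior mean in the direct model: if θ̂_i = n θ_{0,i}/(i^{1+2α} + n) (the noiseless posterior mean with κ_i = 1), and θ_{0,i}² ≤ M i^{-(1+2β)} with 0 < β ≤ α, then ∑_{i≥1} (θ̂_i − θ_{0,i})² ≤ C M n^{-2β/(1+2α)} for a constant C depending only on α, β. -/
/-!
With `A = 1 + 2α` and `x = i + 1`, the `i`-th bias term `x^{2A} θ_x² / (x^A + n)²` is at most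
`θ_x² ≤ M x^{-(1+2β)}`, and also at most `M x^{2A-1-2β} / n²`. Cut the sum at `N = ⌈n^{1/A}⌉`:
below `N` the second bound sums to at most `M N^{2A-2β} / n²`; above `N` the first bound
telescopes against `x^{-2β}` (the increment of `x^{-2β}` dominates `2β x^{-(1+2β)}`), leaving
`M N^{-2β} / (2β)`. Both are of order `M n^{-2β/A}`.
-/

open Finset Real

lemma one_add_mul_one_sub_le_rpow_neg {u p : ℝ} (hu : 0 < u) (hp : 0 ≤ p) :
    1 + p * (1 - u) ≤ u ^ (-p) := by
  have hlog : p * (1 - u) ≤ log u * -p := by nlinarith [log_le_sub_one_of_pos hu]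
  rw [rpow_def_of_pos hu]
  linarith [add_one_le_exp (log u * -p)]

lemma mul_rpow_neg_add_one_le_rpow_neg_sub {x p : ℝ} (hx : 0 < x) (hp : 0 ≤ p) :
    p * (x + 1) ^ (-(1 + p)) ≤ x ^ (-p) - (x + 1) ^ (-p) := by
  have hx1 : 0 < x + 1 := by linarith
  have hu : 0 < x / (x + 1) := by positivity
  have hsplit : x ^ (-p) = (x / (x + 1)) ^ (-p) * (x + 1) ^ (-p) := by
    rw [← mul_rpow hu.le hx1.le, div_mul_cancel₀ x hx1.ne']
  have hpow : (x + 1) ^ (-(1 + p)) = (x + 1) ^ (-p) / (x + 1) := by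
    rw [neg_add, rpow_add hx1, rpow_neg_one, div_eq_mul_inv, mul_comm]
  have hbern := one_add_mul_one_sub_le_rpow_neg hu hp
  have h1u : 1 - x / (x + 1) = 1 / (x + 1) := by field_simp; ring
  rw [h1u] at hbern
  rw [hsplit, hpow]
  calc p * ((x + 1) ^ (-p) / (x + 1)) = (1 + p * (1 / (x + 1)) - 1) * (x + 1) ^ (-p) := by ring
    _ ≤ ((x / (x + 1)) ^ (-p) - 1) * (x + 1) ^ (-p) := by gcongr
    _ = _ := by ring

lemma sum_range_nat_add_rpow_neg_le {p : ℝ} (hp : 0 < p) {N : ℕ} (hN : 1 ≤ N) (m : ℕ) :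
    ∑ i ∈ range m, (((i + N : ℕ) : ℝ) + 1) ^ (-(1 + p)) ≤ (N : ℝ) ^ (-p) / p := by
  set g : ℕ → ℝ := fun k => ((k + N : ℕ) : ℝ) ^ (-p)
  have hstep : ∀ i, (((i + N : ℕ) : ℝ) + 1) ^ (-(1 + p)) ≤ (g i - g (i + 1)) / p := by
    intro i
    rw [le_div_iff₀ hp, mul_comm]
    have hpos : (0 : ℝ) < ((i + N : ℕ) : ℝ) := by exact_mod_cast (by omega : 0 < i + N)
    have hg : g (i + 1) = (((i + N : ℕ) : ℝ) + 1) ^ (-p) := by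
      simp only [g]; push_cast; ring_nf
    rw [hg]
    exact mul_rpow_neg_add_one_le_rpow_neg_sub hpos hp.le
  calc ∑ i ∈ range m, (((i + N : ℕ) : ℝ) + 1) ^ (-(1 + p))
      ≤ ∑ i ∈ range m, (g i - g (i + 1)) / p := sum_le_sum fun i _ => hstep i
    _ = (g 0 - g m) / p := by rw [← sum_div, sum_range_sub']
    _ ≤ (N : ℝ) ^ (-p) / p := by
        gcongr
        simp only [g, zero_add, sub_le_self_iff]
        positivity

lemma sum_range_rpow_le {γ : ℝ} (hγ : 0 ≤ γ) (N : ℕ) :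
    ∑ i ∈ range N, ((i : ℝ) + 1) ^ γ ≤ (N : ℝ) ^ (γ + 1) := by
  calc ∑ i ∈ range N, ((i : ℝ) + 1) ^ γ ≤ ∑ _i ∈ range N, (N : ℝ) ^ γ := by
        refine sum_le_sum fun i hi => ?_
        have : (i : ℝ) + 1 ≤ N := by exact_mod_cast mem_range.1 hi
        gcongr
    _ = (N : ℝ) ^ (γ + 1) := by
        rw [sum_const, card_range, nsmul_eq_mul]
        rcases N.eq_zero_or_pos with rfl | hN
        · simp [zero_rpow (by linarith : γ + 1 ≠ 0)]
        · rw [rpow_add_one (by positivity)]; ring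

lemma rpow_two_mul_mul_div_sq_le_self {x A n t : ℝ} (hx : 0 ≤ x) (hn : 0 ≤ n) (ht : 0 ≤ t) :
    x ^ (2 * A) * t / (x ^ A + n) ^ 2 ≤ t := by
  have hsq : x ^ (2 * A) = (x ^ A) ^ 2 := by
    rw [← rpow_natCast, ← rpow_mul hx]; ring_nf
  have hxA : 0 ≤ x ^ A := rpow_nonneg hx A
  refine div_le_of_le_mul₀ (by positivity) ht ?_
  rw [hsq, mul_comm]
  gcongr
  linarith

lemma rpow_two_mul_mul_div_sq_le_div {x A n t : ℝ} (hx : 0 ≤ x) (hn : 0 < n) (ht : 0 ≤ t) :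
    x ^ (2 * A) * t / (x ^ A + n) ^ 2 ≤ x ^ (2 * A) * t / n ^ 2 := by
  have hxA : 0 ≤ x ^ A := rpow_nonneg hx A
  gcongr
  linarith

lemma tsum_le_of_two_rpow_bounds {f : ℕ → ℝ} {M A p n : ℝ} (hA : 0 < A) (hp : 0 < p)
    (hpA : p ≤ 2 * A - 1) (hn : 1 ≤ n) (hf : ∀ i, 0 ≤ f i)
    (hf_head : ∀ i, f i ≤ M * ((i : ℝ) + 1) ^ (2 * A - (1 + p)) / n ^ 2)
    (hf_tail : ∀ i, f i ≤ M * ((i : ℝ) + 1) ^ (-(1 + p))) :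
    ∑' i, f i ≤ (2 ^ (2 * A - p) + 1 / p) * M * n ^ (-p / A) := by
  have hM : 0 ≤ M := by simpa using (hf 0).trans (hf_tail 0)
  have hn0 : 0 < n := by linarith
  set y := n ^ (1 / A)
  have hy : 1 ≤ y := one_le_rpow hn (by positivity)
  set N := ⌈y⌉₊
  have hyN : y ≤ N := Nat.le_ceil y
  have hNy : (N : ℝ) ≤ 2 * y := (Nat.ceil_lt_two_mul (by linarith)).le
  have hN : 1 ≤ N := Nat.one_le_ceil_iff.2 (by linarith)
  have hsummable : Summable f := by
    refine .of_nonneg_of_le hf hf_tail (.mul_left M ?_)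
    exact_mod_cast (summable_nat_add_iff 1).2
      (Real.summable_nat_rpow.2 (by linarith : -(1 + p) < -1))
  have hhead : ∑ i ∈ range N, f i ≤ 2 ^ (2 * A - p) * M * n ^ (-p / A) := by
    calc ∑ i ∈ range N, f i ≤ M / n ^ 2 * ∑ i ∈ range N, ((i : ℝ) + 1) ^ (2 * A - (1 + p)) := by
          rw [mul_sum]
          exact sum_le_sum fun i _ => (hf_head i).trans_eq (by ring)
      _ ≤ M / n ^ 2 * (2 * y) ^ (2 * A - p) := by
          gcongr
          refine (sum_range_rpow_le (by linarith) N).trans ?_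
          rw [show 2 * A - (1 + p) + 1 = 2 * A - p by ring]
          gcongr
          linarith
      _ = 2 ^ (2 * A - p) * M * n ^ (-p / A) := by
          rw [mul_rpow (by norm_num) (by positivity), ← rpow_mul hn0.le,
            show -p / A = 1 / A * (2 * A - p) - 2 by field_simp; ring,
            rpow_sub hn0, rpow_two]
          ring
  have htail : ∑' i, f (i + N) ≤ 1 / p * M * n ^ (-p / A) := by
    refine tsum_le_of_sum_range_le (fun i => hf _) fun m => ?_
    calc ∑ i ∈ range m, f (i + N) ≤ M * ∑ i ∈ range m, (((i + N : ℕ) : ℝ) + 1) ^ (-(1 + p)) := by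
          rw [mul_sum]
          exact sum_le_sum fun i _ => by exact_mod_cast hf_tail (i + N)
      _ ≤ M * ((N : ℝ) ^ (-p) / p) := by gcongr; exact sum_range_nat_add_rpow_neg_le hp hN m
      _ ≤ M * (y ^ (-p) / p) := by
          have := rpow_le_rpow_of_nonpos (zero_lt_one.trans_le hy) hyN (neg_nonpos.2 hp.le)
          gcongr
      _ = 1 / p * M * n ^ (-p / A) := by
          rw [← rpow_mul hn0.le, show 1 / A * -p = -p / A by ring]
          ring
  rw [← hsummable.sum_add_tsum_nat_add N, add_mul, add_mul]
  exact add_le_add hhead htail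

/-- Squared bias of the posterior mean in the direct model: if θ_{0,i}² ≤ M i^{-(1+2β)} with
0 < β ≤ α, then ∑_i i^{2(1+2α)} θ_{0,i}²/(i^{1+2α}+n)² ≤ C M n^{-2β/(1+2α)} for a constant C
depending only on α, β. -/
theorem posterior_mean_bias_bound (α β : ℝ) (hβ : 0 < β) (hβα : β ≤ α) :
    ∃ C : ℝ, 0 < C ∧ ∀ (M : ℝ), 0 < M → ∀ (θ : ℕ → ℝ),
      (∀ i : ℕ, 1 ≤ i → θ i ^ 2 ≤ M * (i : ℝ) ^ (-(1 + 2 * β))) →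
      ∀ n : ℕ, 1 ≤ n →
        (∑' i : ℕ, ((i : ℝ) + 1) ^ (2 * (1 + 2 * α)) * θ (i + 1) ^ 2 /
            (((i : ℝ) + 1) ^ (1 + 2 * α) + n) ^ 2) ≤
          C * M * (n : ℝ) ^ (-(2 * β) / (1 + 2 * α)) := by
  refine ⟨2 ^ (2 * (1 + 2 * α) - 2 * β) + 1 / (2 * β), by positivity, fun M _ θ hθ n hn => ?_⟩
  have hθ' (i : ℕ) : θ (i + 1) ^ 2 ≤ M * ((i : ℝ) + 1) ^ (-(1 + 2 * β)) := by
    exact_mod_cast hθ (i + 1) i.succ_pos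
  have hn0 : (0 : ℝ) < n := by exact_mod_cast hn
  refine tsum_le_of_two_rpow_bounds (by linarith) (by linarith) (by linarith)
    (by exact_mod_cast hn) (fun i => by positivity) (fun i => ?_) (fun i => ?_)
  · calc _ ≤ ((i : ℝ) + 1) ^ (2 * (1 + 2 * α)) * θ (i + 1) ^ 2 / (n : ℝ) ^ 2 :=
          rpow_two_mul_mul_div_sq_le_div (by positivity) hn0 (sq_nonneg _)
      _ ≤ ((i : ℝ) + 1) ^ (2 * (1 + 2 * α)) * (M * ((i : ℝ) + 1) ^ (-(1 + 2 * β))) /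
          (n : ℝ) ^ 2 := by gcongr; exact hθ' i
      _ = _ := by
          rw [mul_left_comm, ← rpow_add (by positivity), ← sub_eq_add_neg]
  · exact (rpow_two_mul_mul_div_sq_le_self (by positivity) hn0.le (sq_nonneg _)).trans (hθ' i)
end

section
/- When α = β, the sum of squared bias and posterior variance in the direct white noise model is of order n^{-2β/(1+2β)}: with θ_{0,i}² ≤ M i^{-(1+2β)}, one has ∑_i i^{2(1+2β)}θ_{0,i}²/(i^{1+2β}+n)² + ∑_i 1/(i^{1+2β}+n) ≤ C(M+1) n^{-2β/(1+2β)}. -/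
/-!
With `p = 1 + 2β` and `a = i ^ p`, the hypothesis `θᵢ² ≤ M / a` makes each squared-bias term
`a² θᵢ² / (a + n)²` at most `M / (a + n)`, so the bias is at most `M` times the variance
`∑ 1 / (i ^ p + n)`. Splitting the variance at `N = ⌈n ^ (1/p)⌉`, the first `N` terms are each at
most `1 / n`, and by the integral test the tail is at most `∑_{i > N} i ^ (-p) ≤ N ^ (1 - p) / (p - 1)`;
both parts are `O(n ^ (1/p - 1)) = O(n ^ (-2β / (1 + 2β)))`.
-/

open Real Set Finset

lemma tsum_rpow_neg_nat_add_le {p : ℝ} (hp : 1 < p) {N : ℕ} (hN : 1 ≤ N) :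
    ∑' i : ℕ, ((i + N + 1 : ℕ) : ℝ) ^ (-p) ≤ (N : ℝ) ^ (1 - p) / (p - 1) := by
  have hN0 : (0 : ℝ) < N := by exact_mod_cast hN
  calc ∑' i : ℕ, ((i + N + 1 : ℕ) : ℝ) ^ (-p) ≤ ∫ x in Ioi (N : ℝ), x ^ (-p) :=
        AntitoneOn.tsum_comp_add_le_integral N
          (fun x hx y _ hxy => rpow_le_rpow_of_nonpos (hN0.trans_le hx) hxy (by linarith))
          (integrableOn_Ioi_rpow_of_lt (by linarith) hN0)
          (fun x hx => (rpow_pos_of_pos (hN0.trans hx) _).le)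
    _ = (N : ℝ) ^ (1 - p) / (p - 1) := by
        rw [integral_Ioi_rpow_of_lt (by linarith) hN0, neg_div, ← div_neg]
        ring_nf

lemma one_div_rpow_add_le_rpow_neg {x : ℝ} (hx : 0 < x) (p : ℝ) {n : ℝ} (hn : 0 ≤ n) :
    1 / (x ^ p + n) ≤ x ^ (-p) := by
  rw [rpow_neg hx.le, ← one_div]
  exact one_div_le_one_div_of_le (rpow_pos_of_pos hx p) (le_add_of_nonneg_right hn)

lemma summable_one_div_rpow_add {p : ℝ} (hp : 1 < p) {n : ℝ} (hn : 0 ≤ n) :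
    Summable fun i : ℕ => 1 / (((i : ℝ) + 1) ^ p + n) := by
  have hsum : Summable fun i : ℕ => ((i + 1 : ℕ) : ℝ) ^ (-p) :=
    (summable_nat_add_iff 1).2 (summable_nat_rpow.2 (by linarith))
  refine hsum.of_nonneg_of_le (fun i => by positivity) fun i => ?_
  exact_mod_cast one_div_rpow_add_le_rpow_neg (by positivity) p hn

theorem tsum_one_div_rpow_add_le {p : ℝ} (hp : 1 < p) {n : ℝ} (hn : 1 ≤ n) :
    ∑' i : ℕ, 1 / (((i : ℝ) + 1) ^ p + n) ≤ (2 + 1 / (p - 1)) * n ^ (1 / p - 1) := by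
  set f : ℕ → ℝ := fun i => 1 / (((i : ℝ) + 1) ^ p + n)
  set r : ℝ := n ^ (1 / p)
  set N : ℕ := ⌈r⌉₊
  have hn0 : 0 < n := by linarith
  have hr : 1 ≤ r := one_le_rpow hn (by positivity)
  have hN : 1 ≤ N := Nat.one_le_ceil_iff.2 (by linarith)
  have head : ∑ i ∈ range N, f i ≤ 2 * n ^ (1 / p - 1) := by
    have hfi : ∀ i ∈ range N, f i ≤ 1 / n := fun i _ =>
      one_div_le_one_div_of_le hn0 (le_add_of_nonneg_left (by positivity))
    calc ∑ i ∈ range N, f i ≤ N * (1 / n) := by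
          simpa using sum_le_card_nsmul (range N) f (1 / n) hfi
      _ ≤ 2 * r * (1 / n) := by
          gcongr
          linarith [Nat.ceil_lt_add_one (zero_le_one.trans hr)]
      _ = 2 * n ^ (1 / p - 1) := by rw [rpow_sub_one hn0.ne']; ring
  have tail : ∑' i, f (i + N) ≤ 1 / (p - 1) * n ^ (1 / p - 1) := by
    have hg : Summable fun i : ℕ => ((i + N + 1 : ℕ) : ℝ) ^ (-p) :=
      (summable_nat_add_iff (N + 1)).2 (summable_nat_rpow.2 (by linarith))
    have hfg : ∀ i, f (i + N) ≤ ((i + N + 1 : ℕ) : ℝ) ^ (-p) := fun i => by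
      have := one_div_rpow_add_le_rpow_neg (x := ((i + N + 1 : ℕ) : ℝ)) (by positivity) p hn0.le
      simp only [f]
      push_cast at this ⊢
      exact this
    calc ∑' i, f (i + N) ≤ ∑' i : ℕ, ((i + N + 1 : ℕ) : ℝ) ^ (-p) :=
          Summable.tsum_le_tsum hfg
            ((summable_nat_add_iff N).2 (summable_one_div_rpow_add hp hn0.le)) hg
      _ ≤ (N : ℝ) ^ (1 - p) / (p - 1) := tsum_rpow_neg_nat_add_le hp hN
      _ ≤ r ^ (1 - p) / (p - 1) :=
          div_le_div_of_nonneg_right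
            (rpow_le_rpow_of_nonpos (by linarith) (Nat.le_ceil r) (by linarith)) (by linarith)
      _ = 1 / (p - 1) * n ^ (1 / p - 1) := by
          rw [← rpow_mul hn0.le]
          field_simp
  rw [← (summable_one_div_rpow_add hp hn0.le).sum_add_tsum_nat_add N]
  linarith

lemma sq_mul_sq_div_add_sq_le {a n M t : ℝ} (ha : 0 < a) (hn : 0 ≤ n) (hM : 0 ≤ M)
    (ht : t ^ 2 ≤ M * a⁻¹) : a ^ 2 * t ^ 2 / (a + n) ^ 2 ≤ M / (a + n) := by
  have hD : 0 < a + n := by linarith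
  have hat : a ^ 2 * t ^ 2 ≤ M * a := by
    calc a ^ 2 * t ^ 2 ≤ a ^ 2 * (M * a⁻¹) := by gcongr
      _ = M * a := by field_simp
  rw [div_le_div_iff₀ (by positivity) hD]
  calc a ^ 2 * t ^ 2 * (a + n) ≤ M * a * (a + n) := by gcongr
    _ ≤ M * (a + n) ^ 2 := by nlinarith [mul_nonneg (mul_nonneg hM hn) hD.le]

theorem tsum_bias_le_mul_tsum_variance {p : ℝ} (hp : 1 < p) {n M : ℝ} (hn : 0 ≤ n) (hM : 0 ≤ M)
    {θ : ℕ → ℝ} (hθ : ∀ i : ℕ, θ (i + 1) ^ 2 ≤ M * ((i : ℝ) + 1) ^ (-p)) :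
    ∑' i : ℕ, ((i : ℝ) + 1) ^ (2 * p) * θ (i + 1) ^ 2 / (((i : ℝ) + 1) ^ p + n) ^ 2 ≤
      M * ∑' i : ℕ, 1 / (((i : ℝ) + 1) ^ p + n) := by
  have hvar := summable_one_div_rpow_add hp hn
  have hterm : ∀ i : ℕ, ((i : ℝ) + 1) ^ (2 * p) * θ (i + 1) ^ 2 / (((i : ℝ) + 1) ^ p + n) ^ 2 ≤
      M * (1 / (((i : ℝ) + 1) ^ p + n)) := fun i => by
    have hx : (0 : ℝ) ≤ (i : ℝ) + 1 := by positivity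
    rw [mul_comm 2 p, rpow_mul hx, rpow_two, mul_one_div]
    refine sq_mul_sq_div_add_sq_le (by positivity) hn hM ?_
    rw [← rpow_neg hx]
    exact hθ i
  rw [← tsum_mul_left]
  exact Summable.tsum_le_tsum hterm
    ((hvar.mul_left M).of_nonneg_of_le (fun i => by positivity) hterm) (hvar.mul_left M)

/-- With matching regularities α = β, the sum of squared bias and posterior variance in the
direct white noise model is of order n^{-2β/(1+2β)}. -/
theorem bias_variance_minimax_rate (β : ℝ) (hβ : 0 < β) :
    ∃ C : ℝ, 0 < C ∧ ∀ (M : ℝ), 0 < M → ∀ (θ : ℕ → ℝ),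
      (∀ i : ℕ, 1 ≤ i → θ i ^ 2 ≤ M * (i : ℝ) ^ (-(1 + 2 * β))) →
      ∀ n : ℕ, 1 ≤ n →
        (∑' i : ℕ, ((i : ℝ) + 1) ^ (2 * (1 + 2 * β)) * θ (i + 1) ^ 2 /
              (((i : ℝ) + 1) ^ (1 + 2 * β) + n) ^ 2) +
            (∑' i : ℕ, 1 / (((i : ℝ) + 1) ^ (1 + 2 * β) + n)) ≤
          C * (M + 1) * (n : ℝ) ^ (-(2 * β) / (1 + 2 * β)) := by
  have hp : 1 < 1 + 2 * β := by linarith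
  refine ⟨2 + 1 / (2 * β), by positivity, fun M hM θ hθ n hn => ?_⟩
  have hn1 : (1 : ℝ) ≤ n := by exact_mod_cast hn
  have hθ' : ∀ i : ℕ, θ (i + 1) ^ 2 ≤ M * ((i : ℝ) + 1) ^ (-(1 + 2 * β)) := fun i => by
    exact_mod_cast hθ (i + 1) (by omega)
  have hbias := tsum_bias_le_mul_tsum_variance hp (n := n) (by positivity) hM.le hθ'
  have hvar := tsum_one_div_rpow_add_le hp hn1
  have hrate : 1 / (1 + 2 * β) - 1 = -(2 * β) / (1 + 2 * β) := by field_simp; ring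
  rw [add_sub_cancel_left, hrate] at hvar
  calc _ ≤ (M + 1) * ∑' i : ℕ, 1 / (((i : ℝ) + 1) ^ (1 + 2 * β) + n) := by linarith
    _ ≤ (M + 1) * ((2 + 1 / (2 * β)) * (n : ℝ) ^ (-(2 * β) / (1 + 2 * β))) := by gcongr
    _ = _ := by ring
end
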